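/- Let G ≤ Aut(T) be a finitely generated regular branch group and let Q be a finite subgroup of G. Then the set of weakly maximal subgroups of G containing Q is uncountable. -/

import Mathlib

/-!
For a ray `ξ`, let `P_ξ` be the subgroup of `G` fixing every ray of the finite orbit `Qξ`. It has
infinite index by spherical transitivity and is normalized by `Q`, so `Q ⊔ P_ξ` still has infinite
index and, `G` being finitely generated, lies in a weakly maximal subgroup `W_ξ`. If a subgroup
`W` of infinite index contained `P_ξ` and `P_ξ'` with `Qξ ∩ Qξ' = ∅`, then for large `n` every
rigid stabilizer of a level-`n` vertex would lie in `P_ξ` or in `P_ξ'`, so `W` would contain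
`ψₙ⁻¹(K^{dⁿ})`, which has finite index because `G` is regular branch over `K`. Hence a given `W`
is `W_ξ` for at most `|Q|²` rays `ξ`, while there are uncountably many rays.
-/

/-- Vertices of the `d`-regular rooted tree: finite words over `Fin d`. -/
abbrev Vtx (d : ℕ) := List (Fin d)

/-- A permutation of the vertex set is a tree automorphism if it fixes the root and
maps children of a vertex to children of its image. -/
def IsTreeAut (d : ℕ) (g : Equiv.Perm (Vtx d)) : Prop :=
  g [] = [] ∧ ∀ (v : Vtx d) (x : Fin d), ∃ y : Fin d, g (v ++ [x]) = g v ++ [y]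

/-- The initial raySegment of length `n` of a boundary point `ξ : ℕ → Fin d`. -/
def raySegment {d : ℕ} (ξ : ℕ → Fin d) (n : ℕ) : Vtx d := List.ofFn fun i : Fin n => ξ i

/-- The vertices at level `n`. -/
abbrev Level (d n : ℕ) := {v : Vtx d // v.length = n}

/-- A group of tree automorphisms is spherically transitive if it acts transitively on
each level. -/
def SphericallyTransitive {d : ℕ} (G : Subgroup (Equiv.Perm (Vtx d))) : Prop :=
  ∀ u v : Vtx d, u.length = v.length → ∃ g ∈ G, g u = v

/-- A group of tree automorphisms is self-similar if all sections of its elements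
belong to it. -/
def SelfSimilar {d : ℕ} (G : Subgroup (Equiv.Perm (Vtx d))) : Prop :=
  ∀ g ∈ G, ∀ v : Vtx d, ∃ h ∈ G, ∀ w : Vtx d, g (v ++ w) = g v ++ h w

/-- The image of `H ∩ Stab(n)` under the map `ψₙ` sending an automorphism fixing level `n`
to the tuple of its sections at the vertices of level `n`. -/
def psiImage {d : ℕ} (H : Subgroup (Equiv.Perm (Vtx d))) (n : ℕ) :
    Subgroup (Level d n → Equiv.Perm (Vtx d)) where
  carrier := {h | ∃ g ∈ H, (∀ v : Level d n, g v.1 = v.1) ∧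
      ∀ (v : Level d n) (w : Vtx d), g (v.1 ++ w) = v.1 ++ h v w}
  one_mem' := ⟨1, H.one_mem, fun _ => rfl, fun _ _ => rfl⟩
  mul_mem' := by
    rintro a b ⟨g, hg, hgf, hga⟩ ⟨g', hg', hg'f, hg'a⟩
    refine ⟨g * g', H.mul_mem hg hg', fun v => ?_, fun v w => ?_⟩
    · rw [Equiv.Perm.mul_apply, hg'f v, hgf v]
    · rw [Equiv.Perm.mul_apply, hg'a v w, hga v (b v w)]; rfl
  inv_mem' := by
    rintro a ⟨g, hg, hgf, hga⟩
    refine ⟨g⁻¹, H.inv_mem hg, fun v => ?_, fun v w => ?_⟩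
    · apply g.injective
      rw [← Equiv.Perm.mul_apply, mul_inv_cancel, Equiv.Perm.one_apply, hgf v]
    · apply g.injective
      rw [← Equiv.Perm.mul_apply, mul_inv_cancel, Equiv.Perm.one_apply, hga v (a⁻¹ v w)]
      show v.1 ++ w = v.1 ++ a v ((a v)⁻¹ w)
      rw [← Equiv.Perm.mul_apply, mul_inv_cancel, Equiv.Perm.one_apply]

/-- `G ≤ Aut(T)` is regular branch over `K` if it consists of tree automorphisms, is
spherically transitive and self-similar, and `K ≤ G` is a finite-index subgroup such that
`ψ₁(K ∩ Stab(1))` contains `K^d` as a subgroup of finite index. -/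
structure IsRegularBranch (d : ℕ) (G K : Subgroup (Equiv.Perm (Vtx d))) : Prop where
  treeAut : ∀ g ∈ G, IsTreeAut d g
  transitive : SphericallyTransitive G
  selfSimilar : SelfSimilar G
  le : K ≤ G
  relindex_ne_zero : K.relIndex G ≠ 0
  pi_le : Subgroup.pi Set.univ (fun _ : Level d 1 => K) ≤ psiImage K 1
  pi_relindex_ne_zero :
    (Subgroup.pi Set.univ (fun _ : Level d 1 => K)).relIndex (psiImage K 1) ≠ 0

/-- `H` is a weakly maximal subgroup of (the subgroup) `G` if `H ≤ G`, `H` has infinite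
index in `G`, and every subgroup of `G` strictly containing `H` has finite index in `G`. -/
def IsWeaklyMaximalIn {P : Type*} [Group P] (G H : Subgroup P) : Prop :=
  H ≤ G ∧ H.relIndex G = 0 ∧
    ∀ M : Subgroup P, M ≤ G → H < M → M.relIndex G ≠ 0

/-- The stabilizer in `G` of a boundary point `ξ` (a parabolic subgroup). -/
def rayStab {d : ℕ} (G : Subgroup (Equiv.Perm (Vtx d))) (ξ : ℕ → Fin d) :
    Subgroup (Equiv.Perm (Vtx d)) where
  carrier := {g | g ∈ G ∧ ∀ n : ℕ, g (raySegment ξ n) = raySegment ξ n}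
  one_mem' := ⟨G.one_mem, fun _ => rfl⟩
  mul_mem' := by
    rintro a b ⟨ha, ha2⟩ ⟨hb, hb2⟩
    exact ⟨G.mul_mem ha hb, fun n => by rw [Equiv.Perm.mul_apply, hb2 n, ha2 n]⟩
  inv_mem' := by
    rintro a ⟨ha, ha2⟩
    refine ⟨G.inv_mem ha, fun n => ?_⟩
    conv_lhs => rw [← ha2 n]
    exact Equiv.symm_apply_apply a (raySegment ξ n)

/-- The rigid stabilizer of a vertex `v` in `G`: elements of `G` fixing every vertex not
having `v` as a prefix. -/
def rist {d : ℕ} (G : Subgroup (Equiv.Perm (Vtx d))) (v : Vtx d) :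
    Subgroup (Equiv.Perm (Vtx d)) where
  carrier := {g | g ∈ G ∧ ∀ w : Vtx d, ¬ v <+: w → g w = w}
  one_mem' := ⟨G.one_mem, fun _ _ => rfl⟩
  mul_mem' := by
    rintro a b ⟨ha, ha2⟩ ⟨hb, hb2⟩
    exact ⟨G.mul_mem ha hb, fun w hw => by rw [Equiv.Perm.mul_apply, hb2 w hw, ha2 w hw]⟩
  inv_mem' := by
    rintro a ⟨ha, ha2⟩
    refine ⟨G.inv_mem ha, fun w hw => ?_⟩
    conv_lhs => rw [← ha2 w hw]
    exact Equiv.symm_apply_apply a w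

open Equiv MulAction

section GroupTheory

open scoped Pointwise

variable {Γ : Type*} [Group Γ]

theorem MulAction.relIndex_stabilizer {α : Type*} [MulAction Γ α] (H : Subgroup Γ) (a : α) :
    (stabilizer Γ a).relIndex H = (orbit H a).ncard := by
  rw [Subgroup.relIndex, ← index_stabilizer]
  congr 1

theorem Subgroup.relIndex_pi_ne_zero {η : Type*} [Finite η] {A B : η → Subgroup Γ}
    (h : ∀ i, (A i).relIndex (B i) ≠ 0) :
    (Subgroup.pi Set.univ A).relIndex (Subgroup.pi Set.univ B) ≠ 0 := by
  have hA : Subgroup.pi Set.univ A = ⨅ i, (A i).comap (Pi.evalMonoidHom (fun _ => Γ) i) := by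
    ext; simp [Subgroup.mem_pi, Subgroup.mem_iInf]
  rw [hA]
  refine Subgroup.relIndex_iInf_ne_zero fun i => mt (Subgroup.relIndex_eq_zero_of_le_right ?_)
    (Subgroup.relIndex_comap_ne_zero _ (h i))
  exact fun t ht => (Subgroup.mem_pi Set.univ).1 ht i (Set.mem_univ i)

theorem Subgroup.relIndex_sup_ne_zero_of_le_normalizer {P Q : Subgroup Γ}
    (hQ : (Q : Set Γ).Finite) (hQP : Q ≤ Subgroup.normalizer (P : Set Γ)) :
    P.relIndex (Q ⊔ P) ≠ 0 := by
  have := hQ.to_subtype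
  have hsurj : Function.Surjective fun q : Q =>
      (QuotientGroup.mk ⟨q, Subgroup.mem_sup_left q.2⟩ : ↥(Q ⊔ P) ⧸ P.subgroupOf (Q ⊔ P)) := by
    intro y
    obtain ⟨x, rfl⟩ := QuotientGroup.mk_surjective y
    have hx : x.1 ∈ (Q : Set Γ) * (P : Set Γ) := by
      rw [← Subgroup.coe_mul_of_left_le_normalizer_right Q P hQP]
      exact x.2
    obtain ⟨q, hq, p, hp, hqp⟩ := hx
    refine ⟨⟨q, hq⟩, QuotientGroup.eq.2 ?_⟩
    simpa [Subgroup.mem_subgroupOf, ← hqp] using hp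
  have := Finite.of_surjective _ hsurj
  exact Subgroup.index_ne_zero_of_finite

theorem Subgroup.FG.exists_le_of_le_sSup {U : Subgroup Γ} (hU : U.FG) {c : Set (Subgroup Γ)}
    (hne : c.Nonempty) (hc : DirectedOn (· ≤ ·) c) (hle : U ≤ sSup c) : ∃ M ∈ c, U ≤ M := by
  obtain ⟨S, rfl⟩ := hU
  obtain ⟨M, hM, hSM⟩ := DirectedOn.exists_mem_subset_of_finset_subset_biUnion
    (f := fun M : Subgroup Γ => (M : Set Γ)) hne hc fun x hx =>
      let ⟨N, hN, hxN⟩ := (Subgroup.mem_sSup_of_directedOn hne hc).1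
        (hle (Subgroup.subset_closure hx))
      Set.mem_biUnion hN hxN
  exact ⟨M, hM, (Subgroup.closure_le M).2 hSM⟩

theorem Subgroup.fg_of_relIndex_ne_zero {G U : Subgroup Γ} (hG : Group.FG G) (hUG : U ≤ G)
    (h : U.relIndex G ≠ 0) : U.FG := by
  have := hG
  have : (U.subgroupOf G).FiniteIndex := ⟨h⟩
  exact (Group.fg_iff_subgroup_fg U).1 <| Group.fg_of_surjective
    (f := (Subgroup.subgroupOfEquivOfLe hUG).toMonoidHom)
    (Subgroup.subgroupOfEquivOfLe hUG).surjective

/-- Finite-index subgroups of `G` are finitely generated, so a chain of subgroups of infinite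
index has a union of infinite index, and Zorn's lemma applies. -/
theorem exists_isWeaklyMaximalIn_le {G H : Subgroup Γ} (hG : Group.FG G) (hHG : H ≤ G)
    (hH : H.relIndex G = 0) : ∃ W, IsWeaklyMaximalIn G W ∧ H ≤ W := by
  have hchain : ∀ c ⊆ {M : Subgroup Γ | M ≤ G ∧ M.relIndex G = 0}, IsChain (· ≤ ·) c →
      ∀ M ∈ c, ∃ U ∈ {M : Subgroup Γ | M ≤ G ∧ M.relIndex G = 0}, ∀ N ∈ c, N ≤ U := by
    intro c hcS hc M hM
    have hcG : sSup c ≤ G := sSup_le fun N hN => (hcS hN).1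
    refine ⟨sSup c, ⟨hcG, ?_⟩, fun N hN => le_sSup hN⟩
    by_contra h
    obtain ⟨N, hN, hcN⟩ := (Subgroup.fg_of_relIndex_ne_zero hG hcG h).exists_le_of_le_sSup
      ⟨M, hM⟩ hc.directedOn le_rfl
    exact h (Subgroup.relIndex_eq_zero_of_le_left hcN (hcS hN).2)
  obtain ⟨W, hHW, ⟨hWG, hW⟩, hmax⟩ := zorn_le_nonempty₀ _ hchain H ⟨hHG, hH⟩
  exact ⟨W, ⟨hWG, hW, fun M hMG hWM hM => hWM.not_ge (hmax ⟨hMG, hM⟩ hWM.le)⟩, hHW⟩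

end GroupTheory

theorem not_countable_nat_fin {d : ℕ} (hd : 2 ≤ d) : ¬ Countable (ℕ → Fin d) := by
  rw [← Cardinal.mk_le_aleph0_iff, not_le, Cardinal.mk_arrow]
  simp only [Cardinal.mk_fin, Cardinal.mk_nat, Cardinal.lift_natCast, Cardinal.lift_aleph0]
  calc Cardinal.aleph0 < 2 ^ Cardinal.aleph0 := Cardinal.cantor _
    _ ≤ d ^ Cardinal.aleph0 := Cardinal.power_le_power_right (by exact_mod_cast hd)

namespace IsTreeAut

variable {d : ℕ} {g : Perm (Vtx d)}

theorem exists_apply_append (hg : IsTreeAut d g) (u w : Vtx d) :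
    ∃ w', w'.length = w.length ∧ g (u ++ w) = g u ++ w' := by
  induction w using List.reverseRecOn with
  | nil => exact ⟨[], rfl, by simp⟩
  | append_singleton w x ih =>
    obtain ⟨w', hlen, hw⟩ := ih
    obtain ⟨y, hy⟩ := hg.2 (u ++ w) x
    exact ⟨w' ++ [y], by simp [hlen], by rw [← List.append_assoc, hy, hw, List.append_assoc]⟩

theorem length_apply (hg : IsTreeAut d g) (v : Vtx d) : (g v).length = v.length := by
  obtain ⟨w', hlen, hw⟩ := hg.exists_apply_append [] v
  simpa [hg.1, hlen] using congrArg List.length hw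

theorem apply_take (hg : IsTreeAut d g) (v : Vtx d) (n : ℕ) :
    g (v.take n) = (g v).take n := by
  rcases le_total v.length n with h | h
  · rw [List.take_of_length_le h, List.take_of_length_le (by rwa [hg.length_apply])]
  · obtain ⟨w', -, hw⟩ := hg.exists_apply_append (v.take n) (v.drop n)
    rw [List.take_append_drop] at hw
    rw [hw, List.take_left' (by rw [hg.length_apply, List.length_take]; omega)]

end IsTreeAut

section Levels

variable {d : ℕ} {G : Subgroup (Perm (Vtx d))}

instance (d n : ℕ) : Finite (Level d n) := (List.finite_length_eq (Fin d) n).to_subtype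

theorem orbit_subset_level (hG : ∀ g ∈ G, IsTreeAut d g) (v : Vtx d) :
    orbit G v ⊆ {u | u.length = v.length} := by
  rintro _ ⟨g, rfl⟩
  exact (hG g g.2).length_apply v

theorem relIndex_stabilizer_ne_zero (hG : ∀ g ∈ G, IsTreeAut d g) (v : Vtx d) :
    (stabilizer (Perm (Vtx d)) v).relIndex G ≠ 0 := by
  rw [relIndex_stabilizer]
  exact Set.ncard_ne_zero_of_mem (mem_orbit_self v)
    ((List.finite_length_eq (Fin d) v.length).subset (orbit_subset_level hG v))

theorem SphericallyTransitive.relIndex_stabilizer (hT : SphericallyTransitive G)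
    (hG : ∀ g ∈ G, IsTreeAut d g) (v : Vtx d) :
    (stabilizer (Perm (Vtx d)) v).relIndex G = d ^ v.length := by
  have horbit : orbit G v = {u | u.length = v.length} := by
    refine (orbit_subset_level hG v).antisymm fun u hu => ?_
    obtain ⟨g, hg, rfl⟩ := hT v u hu.symm
    exact ⟨⟨g, hg⟩, rfl⟩
  rw [MulAction.relIndex_stabilizer, horbit, ← Nat.card_coe_set_eq]
  show Nat.card (List.Vector (Fin d) v.length) = _
  rw [Nat.card_eq_fintype_card, card_vector, Fintype.card_fin]

def levelStab (d n : ℕ) : Subgroup (Perm (Vtx d)) :=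
  ⨅ v : Level d n, stabilizer (Perm (Vtx d)) v.1

theorem mem_levelStab {n : ℕ} {g : Perm (Vtx d)} :
    g ∈ levelStab d n ↔ ∀ v : Level d n, g v.1 = v.1 := by
  simp [levelStab, Subgroup.mem_iInf, mem_stabilizer_iff, Perm.smul_def]

theorem relIndex_levelStab_ne_zero (hG : ∀ g ∈ G, IsTreeAut d g) (n : ℕ) :
    (levelStab d n).relIndex G ≠ 0 :=
  Subgroup.relIndex_iInf_ne_zero fun v => relIndex_stabilizer_ne_zero hG v.1

end Levels

section Sections

variable {d : ℕ} {G : Subgroup (Perm (Vtx d))} (hG : SelfSimilar G)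

noncomputable def sectionAt {g : Perm (Vtx d)} (hg : g ∈ G) (v : Vtx d) : Perm (Vtx d) :=
  (hG g hg v).choose

theorem apply_append_sectionAt {g : Perm (Vtx d)} (hg : g ∈ G) (v w : Vtx d) :
    g (v ++ w) = g v ++ sectionAt hG hg v w :=
  (hG g hg v).choose_spec.2 w

theorem eq_sectionAt {g : Perm (Vtx d)} (hg : g ∈ G) {v : Vtx d} {k : Perm (Vtx d)}
    (hk : ∀ w, g (v ++ w) = g v ++ k w) : k = sectionAt hG hg v :=
  Equiv.ext fun w => List.append_cancel_left ((hk w).symm.trans (apply_append_sectionAt hG hg v w))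

noncomputable def psi : ↥(G ⊓ levelStab d 1) →* (Level d 1 → Perm (Vtx d)) :=
  MonoidHom.mk' (fun g v => sectionAt hG (Subgroup.mem_inf.1 g.2).1 v.1) fun a b => by
    funext v
    refine (eq_sectionAt hG _ fun w => ?_).symm
    have hb : b.1 v.1 = v.1 := mem_levelStab.1 (Subgroup.mem_inf.1 b.2).2 v
    rw [Subgroup.coe_mul, Perm.mul_apply, Perm.mul_apply, apply_append_sectionAt hG _ v.1 w, hb,
      apply_append_sectionAt hG _ v.1]
    rfl

theorem apply_append_psi (g : ↥(G ⊓ levelStab d 1)) (v : Level d 1) (w : Vtx d) :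
    g.1 (v.1 ++ w) = v.1 ++ psi hG g v w := by
  rw [apply_append_sectionAt hG (Subgroup.mem_inf.1 g.2).1,
    mem_levelStab.1 (Subgroup.mem_inf.1 g.2).2 v]
  rfl

noncomputable def psiPreimage (P : Subgroup (Level d 1 → Perm (Vtx d))) :
    Subgroup (Perm (Vtx d)) :=
  (P.comap (psi hG)).map (G ⊓ levelStab d 1).subtype

theorem psiPreimage_mono {P P' : Subgroup (Level d 1 → Perm (Vtx d))} (h : P ≤ P') :
    psiPreimage hG P ≤ psiPreimage hG P' :=
  Subgroup.map_mono (Subgroup.comap_mono h)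

theorem relIndex_psiPreimage_ne_zero {P P' : Subgroup (Level d 1 → Perm (Vtx d))}
    (h : P.relIndex P' ≠ 0) : (psiPreimage hG P).relIndex (psiPreimage hG P') ≠ 0 := by
  rw [psiPreimage, psiPreimage,
    Subgroup.relIndex_map_map_of_injective _ _ (Subgroup.subtype_injective _)]
  exact Subgroup.relIndex_comap_ne_zero _ h

theorem inf_levelStab_le_psiPreimage_psiImage {H : Subgroup (Perm (Vtx d))} (hHG : H ≤ G) :
    H ⊓ levelStab d 1 ≤ psiPreimage hG (psiImage H 1) := by
  intro g hg
  have hg' : g ∈ G ⊓ levelStab d 1 := ⟨hHG hg.1, hg.2⟩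
  exact ⟨⟨g, hg'⟩, ⟨g, hg.1, mem_levelStab.1 hg.2, apply_append_psi hG ⟨g, hg'⟩⟩, rfl⟩

theorem psiPreimage_psiImage_le (hGaut : ∀ g ∈ G, IsTreeAut d g) {H : Subgroup (Perm (Vtx d))}
    (hHG : H ≤ G) : psiPreimage hG (psiImage H 1) ≤ H := by
  rintro _ ⟨g, ⟨g', hg'H, -, hg'⟩, rfl⟩
  suffices g.1 = g' by simpa [this] using hg'H
  ext1 u
  cases u with
  | nil => rw [(hGaut _ (Subgroup.mem_inf.1 g.2).1).1, (hGaut _ (hHG hg'H)).1]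
  | cons x w => exact (apply_append_psi hG g ⟨[x], rfl⟩ w).trans (hg' ⟨[x], rfl⟩ w).symm

end Sections

section LevelPower

variable {d : ℕ} {G K : Subgroup (Perm (Vtx d))}

/-- `ψₙ⁻¹(K^{dⁿ})`, built recursively as `ψ₁⁻¹((ψₙ₋₁⁻¹(K^{dⁿ⁻¹}))^d)`. -/
noncomputable def levelPower (hG : SelfSimilar G) (K : Subgroup (Perm (Vtx d))) :
    ℕ → Subgroup (Perm (Vtx d))
  | 0 => K
  | n + 1 => psiPreimage hG (Subgroup.pi Set.univ fun _ => levelPower hG K n)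

variable (hGK : IsRegularBranch d G K)

theorem relIndex_levelPower_succ_ne_zero (n : ℕ) :
    (levelPower hGK.selfSimilar K (n + 1)).relIndex (levelPower hGK.selfSimilar K n) ≠ 0 := by
  induction n with
  | zero =>
    have hstab : (psiPreimage hGK.selfSimilar (psiImage K 1)).relIndex K ≠ 0 := by
      refine mt (Subgroup.relIndex_eq_zero_of_le_left
        (inf_levelStab_le_psiPreimage_psiImage _ hGK.le)) ?_
      rw [Subgroup.inf_relIndex_left]
      exact relIndex_levelStab_ne_zero (fun g hg => hGK.treeAut g (hGK.le hg)) 1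
    exact Subgroup.relIndex_ne_zero_trans
      (relIndex_psiPreimage_ne_zero _ hGK.pi_relindex_ne_zero) hstab
  | succ n ih => exact relIndex_psiPreimage_ne_zero _ (Subgroup.relIndex_pi_ne_zero fun _ => ih)

theorem relIndex_levelPower_ne_zero (n : ℕ) :
    (levelPower hGK.selfSimilar K n).relIndex G ≠ 0 := by
  induction n with
  | zero => exact hGK.relindex_ne_zero
  | succ n ih => exact Subgroup.relIndex_ne_zero_trans (relIndex_levelPower_succ_ne_zero hGK n) ih

end LevelPower

section Rist

variable {d : ℕ} {G K : Subgroup (Perm (Vtx d))}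

theorem rist_mono {H H' : Subgroup (Perm (Vtx d))} (h : H ≤ H') (v : Vtx d) :
    rist H v ≤ rist H' v :=
  fun _ hg => ⟨h hg.1, hg.2⟩

/-- The element of `K` acting as `k ∈ rist_K(u)` below the vertex `v` and trivially elsewhere lies
in `rist_K(vu)`. -/
theorem mulSingle_mem_psiImage_inf (hGK : IsRegularBranch d G K) {W : Subgroup (Perm (Vtx d))}
    {v : Level d 1} {u : Vtx d} (hW : rist K (v.1 ++ u) ≤ W) {k : Perm (Vtx d)}
    (hk : k ∈ rist K u) : Pi.mulSingle v k ∈ psiImage (K ⊓ W) 1 := by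
  obtain ⟨g, hgK, hfix, hg⟩ := hGK.pi_le ((Subgroup.mulSingle_mem_pi v k).2 fun _ => hk.1)
  refine ⟨g, ⟨hgK, hW ⟨hgK, fun z hz => ?_⟩⟩, hfix, hg⟩
  cases z with
  | nil => exact (hGK.treeAut g (hGK.le hgK)).1
  | cons y z =>
    have hyz := hg ⟨[y], rfl⟩ z
    rcases eq_or_ne (⟨[y], rfl⟩ : Level d 1) v with rfl | hne
    · rw [Pi.mulSingle_eq_same] at hyz
      exact hyz.trans (congrArg _ (hk.2 z fun h => hz ((List.prefix_append_right_inj [y]).2 h)))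
    · rwa [Pi.mulSingle_eq_of_ne hne] at hyz

theorem levelPower_le_of_rist_le (hGK : IsRegularBranch d G K) {n : ℕ}
    {W : Subgroup (Perm (Vtx d))} (hW : ∀ v : Vtx d, v.length = n → rist K v ≤ W) :
    levelPower hGK.selfSimilar K n ≤ W := by
  induction n generalizing W with
  | zero => exact fun g hg => hW [] rfl ⟨hg, fun w hw => absurd w.nil_prefix hw⟩
  | succ n ih =>
    have hpi : Subgroup.pi Set.univ (fun _ => levelPower hGK.selfSimilar K n) ≤
        psiImage (K ⊓ W) 1 :=
      Subgroup.pi_le_iff.2 fun v => Subgroup.map_le_iff_le_comap.2 <| ih fun u hu _ hk =>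
        mulSingle_mem_psiImage_inf hGK (hW _ (by rw [List.length_append, v.2, hu, add_comm])) hk
    exact (psiPreimage_mono _ hpi).trans <|
      (psiPreimage_psiImage_le _ hGK.treeAut (inf_le_left.trans hGK.le)).trans inf_le_right

end Rist

section Rays

variable {d : ℕ} {G K Q : Subgroup (Perm (Vtx d))}

theorem length_raySegment (ξ : ℕ → Fin d) (n : ℕ) : (raySegment ξ n).length = n := by
  simp [raySegment]

theorem take_raySegment (ξ : ℕ → Fin d) {m n : ℕ} (h : m ≤ n) :
    (raySegment ξ n).take m = raySegment ξ m := by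
  apply List.ext_getElem
  · rw [List.length_take, length_raySegment, length_raySegment]
    omega
  · intro i _ _
    simp [raySegment]

theorem eq_of_raySegment_eq {ξ ξ' : ℕ → Fin d} (h : ∀ n, raySegment ξ n = raySegment ξ' n) :
    ξ = ξ' := by
  funext n
  simpa using congrFun (List.ofFn_inj.1 (h (n + 1))) (Fin.last n)

theorem IsTreeAut.apply_raySegment_of_le {g : Perm (Vtx d)} (hg : IsTreeAut d g)
    (ξ : ℕ → Fin d) {m n : ℕ} (h : m ≤ n) :
    g (raySegment ξ m) = (g (raySegment ξ n)).take m := by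
  rw [← hg.apply_take, take_raySegment ξ h]

/-- `P_ξ`, the pointwise stabilizer in `G` of the orbit `Qξ`. -/
def orbitFixer (G Q : Subgroup (Perm (Vtx d))) (ξ : ℕ → Fin d) : Subgroup (Perm (Vtx d)) :=
  G ⊓ ⨅ (q : Q) (n : ℕ), stabilizer (Perm (Vtx d)) (q.1 (raySegment ξ n))

theorem orbitFixer_le {ξ : ℕ → Fin d} : orbitFixer G Q ξ ≤ G :=
  inf_le_left

theorem mem_orbitFixer {ξ : ℕ → Fin d} {g : Perm (Vtx d)} :
    g ∈ orbitFixer G Q ξ ↔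
      g ∈ G ∧ ∀ q ∈ Q, ∀ n, g (q (raySegment ξ n)) = q (raySegment ξ n) := by
  simp [orbitFixer, Subgroup.mem_iInf, mem_stabilizer_iff, Perm.smul_def]

theorem conj_mem_orbitFixer (hQG : Q ≤ G) {ξ : ℕ → Fin d} {q g : Perm (Vtx d)} (hq : q ∈ Q)
    (hg : g ∈ orbitFixer G Q ξ) : q * g * q⁻¹ ∈ orbitFixer G Q ξ := by
  obtain ⟨hgG, hfix⟩ := mem_orbitFixer.1 hg
  refine mem_orbitFixer.2 ⟨G.mul_mem (G.mul_mem (hQG hq) hgG) (G.inv_mem (hQG hq)),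
    fun q' hq' n => ?_⟩
  have := hfix _ (Q.mul_mem (Q.inv_mem hq) hq') n
  simp only [Perm.mul_apply] at this ⊢
  rw [this]
  exact q.apply_symm_apply _

theorem le_normalizer_orbitFixer (hQG : Q ≤ G) (ξ : ℕ → Fin d) :
    Q ≤ Subgroup.normalizer (orbitFixer G Q ξ : Set (Perm (Vtx d))) := fun q hq =>
  Subgroup.mem_normalizer_iff.2 fun g => ⟨conj_mem_orbitFixer hQG hq, fun h => by
    simpa [mul_assoc] using conj_mem_orbitFixer hQG (Q.inv_mem hq) h⟩

theorem relIndex_orbitFixer_eq_zero (hd : 2 ≤ d) (hGK : IsRegularBranch d G K) (ξ : ℕ → Fin d) :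
    (orbitFixer G Q ξ).relIndex G = 0 := by
  by_contra h
  have hle (n : ℕ) : d ^ n ≤ (orbitFixer G Q ξ).relIndex G := by
    have hstab := hGK.transitive.relIndex_stabilizer hGK.treeAut (raySegment ξ n)
    rw [length_raySegment] at hstab
    refine hstab ▸ Subgroup.relIndex_le_of_le_left (fun g hg => ?_) h
    simpa [mem_stabilizer_iff] using (mem_orbitFixer.1 hg).2 1 Q.one_mem n
  have := hle ((orbitFixer G Q ξ).relIndex G)
  have := Nat.pow_le_pow_left hd ((orbitFixer G Q ξ).relIndex G)
  have := ((orbitFixer G Q ξ).relIndex G).lt_two_pow_self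
  omega

theorem rist_le_orbitFixer (hQ : ∀ q ∈ Q, IsTreeAut d q) {ξ : ℕ → Fin d} {v : Vtx d}
    (hv : ∀ q ∈ Q, q (raySegment ξ v.length) ≠ v) : rist G v ≤ orbitFixer G Q ξ := by
  refine fun g hg => mem_orbitFixer.2 ⟨hg.1, fun q hq n => hg.2 _ fun hpre => hv q hq ?_⟩
  have hlen : v.length ≤ n := by
    simpa [(hQ q hq).length_apply, length_raySegment] using hpre.length_le
  rw [(hQ q hq).apply_raySegment_of_le ξ hlen]
  exact (List.prefix_iff_eq_take.1 hpre).symm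

theorem exists_forall_apply_raySegment_ne (hQ : ∀ q ∈ Q, IsTreeAut d q)
    (hQfin : (Q : Set (Perm (Vtx d))).Finite) {ξ ξ' : ℕ → Fin d}
    (h : ∀ q ∈ Q, ∀ q' ∈ Q, ∃ n, q (raySegment ξ n) ≠ q' (raySegment ξ' n)) :
    ∃ N, ∀ q ∈ Q, ∀ q' ∈ Q, q (raySegment ξ N) ≠ q' (raySegment ξ' N) := by
  have := hQfin.to_subtype
  choose n hn using fun p : Q × Q => h p.1 p.1.2 p.2 p.2.2
  obtain ⟨N, hN⟩ := Finite.exists_le n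
  refine ⟨N, fun q hq q' hq' heq => hn (⟨q, hq⟩, ⟨q', hq'⟩) ?_⟩
  rw [(hQ q hq).apply_raySegment_of_le ξ (hN _), (hQ q' hq').apply_raySegment_of_le ξ' (hN _),
    heq]

/-- If the orbits `Qξ` and `Qξ'` were disjoint at some level `N`, every rigid stabilizer of level
`N` would lie in `P_ξ` or in `P_ξ'`, and `W` would contain the finite-index subgroup
`levelPower K N`. -/
theorem exists_eq_of_orbitFixer_le (hGK : IsRegularBranch d G K) (hQG : Q ≤ G)
    (hQfin : (Q : Set (Perm (Vtx d))).Finite) {W : Subgroup (Perm (Vtx d))}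
    (hW : W.relIndex G = 0) {ξ ξ' : ℕ → Fin d} (hξ : orbitFixer G Q ξ ≤ W)
    (hξ' : orbitFixer G Q ξ' ≤ W) :
    ∃ q ∈ Q, ∃ q' ∈ Q, ∀ n, q (raySegment ξ n) = q' (raySegment ξ' n) := by
  have hQ : ∀ q ∈ Q, IsTreeAut d q := fun q hq => hGK.treeAut q (hQG hq)
  by_contra! h
  obtain ⟨N, hN⟩ := exists_forall_apply_raySegment_ne hQ hQfin h
  refine relIndex_levelPower_ne_zero hGK N (Subgroup.relIndex_eq_zero_of_le_left
    (levelPower_le_of_rist_le hGK fun v hv => (rist_mono hGK.le v).trans ?_) hW)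
  subst hv
  by_cases hvξ : ∃ q ∈ Q, q (raySegment ξ v.length) = v
  · obtain ⟨q, hq, hqv⟩ := hvξ
    exact (rist_le_orbitFixer hQ fun q' hq' heq => hN q hq q' hq' (hqv.trans heq.symm)).trans hξ'
  · push Not at hvξ
    exact (rist_le_orbitFixer hQ hvξ).trans hξ

theorem finite_setOf_orbitFixer_le (hGK : IsRegularBranch d G K) (hQG : Q ≤ G)
    (hQfin : (Q : Set (Perm (Vtx d))).Finite) {W : Subgroup (Perm (Vtx d))}
    (hW : W.relIndex G = 0) : {ξ | orbitFixer G Q ξ ≤ W}.Finite := by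
  rcases Set.eq_empty_or_nonempty {ξ | orbitFixer G Q ξ ≤ W} with hempty | ⟨ξ, hξ⟩
  · exact hempty ▸ Set.finite_empty
  refine ((hQfin.prod hQfin).biUnion fun p _ =>
    Set.Subsingleton.finite (s := {ξ' | ∀ n, p.1 (raySegment ξ n) = p.2 (raySegment ξ' n)})
      fun ξ₁ h₁ ξ₂ h₂ => eq_of_raySegment_eq fun n => p.2.injective ((h₁ n).symm.trans (h₂ n)))
    |>.subset fun ξ' hξ' => ?_
  obtain ⟨q, hq, q', hq', h⟩ := exists_eq_of_orbitFixer_le hGK hQG hQfin hW hξ hξ'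
  exact Set.mem_biUnion (x := (q, q')) ⟨hq, hq'⟩ h

theorem exists_isWeaklyMaximalIn_orbitFixer_le (hd : 2 ≤ d) (hGK : IsRegularBranch d G K)
    (hfg : Group.FG G) (hQG : Q ≤ G) (hQfin : (Q : Set (Perm (Vtx d))).Finite)
    (ξ : ℕ → Fin d) : ∃ W, (IsWeaklyMaximalIn G W ∧ Q ≤ W) ∧ orbitFixer G Q ξ ≤ W := by
  have hH : (Q ⊔ orbitFixer G Q ξ).relIndex G = 0 := by
    by_contra h
    exact Subgroup.relIndex_ne_zero_trans (Subgroup.relIndex_sup_ne_zero_of_le_normalizer hQfin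
      (le_normalizer_orbitFixer hQG ξ)) h (relIndex_orbitFixer_eq_zero hd hGK ξ)
  obtain ⟨W, hW, hHW⟩ := exists_isWeaklyMaximalIn_le hfg (sup_le hQG orbitFixer_le) hH
  exact ⟨W, ⟨hW, le_sup_left.trans hHW⟩, le_sup_right.trans hHW⟩

end Rays

/-- In a finitely generated regular branch group `G`, for any finite subgroup `Q ≤ G` the
set of weakly maximal subgroups of `G` containing `Q` is uncountable. -/
theorem uncountable_weaklyMaximal_containing {d : ℕ} (hd : 2 ≤ d)
    (G K : Subgroup (Equiv.Perm (Vtx d))) (hGK : IsRegularBranch d G K)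
    (hfg : Group.FG G) (Q : Subgroup (Equiv.Perm (Vtx d))) (hQG : Q ≤ G)
    (hQfin : (Q : Set (Equiv.Perm (Vtx d))).Finite) :
    ¬ ({W : Subgroup (Equiv.Perm (Vtx d)) | IsWeaklyMaximalIn G W ∧ Q ≤ W}).Countable := by
  intro hS
  choose W hWS hPW using exists_isWeaklyMaximalIn_orbitFixer_le hd hGK hfg hQG hQfin
  have := hS.to_subtype
  refine not_countable_nat_fin hd (Set.Countable.of_preimage_singleton
    (f := fun ξ => (⟨W ξ, hWS ξ⟩ : {W | IsWeaklyMaximalIn G W ∧ Q ≤ W})) fun S => ?_)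
  exact (finite_setOf_orbitFixer_le hGK hQG hQfin S.2.1.2.1).countable.mono
    fun ξ hξ => (hPW ξ).trans (congrArg Subtype.val hξ).le
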